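/- arXiv:1710.04394 — 2 statements merged into one kernel-verified Lean document; each statement's English description precedes it below -/
import Mathlib

section
/- Suppose Ŷ is D,d individually fair with respect to X (i.e., for all x,x', D(p(x), p(x')) ≤ d(x,x') where p(x) := P(Ŷ=1|X=x)), D satisfies the triangle inequality, and P(d(x, f(x)) > ε) ≤ δ for x ~ X. Define Ŷ_f by P(Ŷ_f=1|X=x) = p(f(x)). Then for x, x' independent samples of X, P[D(P(Ŷ_f=1|X=x), P(Ŷ_f=1|X=x')) > d(x,x') + 2ε] ≤ 2δ. -/
open Finset Classical Real

open Classical in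
/-- Probability of event `E` under weight function `p` on a finite sample space. -/
noncomputable def Pr {Ω : Type*} [Fintype Ω] (p : Ω → ℝ) (E : Ω → Prop) : ℝ :=
  ∑ ω, if E ω then p ω else 0

/-- Conditional probability `P(A | B)`. -/
noncomputable def cPr {Ω : Type*} [Fintype Ω] (p : Ω → ℝ) (A B : Ω → Prop) : ℝ :=
  Pr p (fun ω => A ω ∧ B ω) / Pr p B

/-- Statistical parity `SP(Ŷ,S) = P(Ŷ=1|S=1) - P(Ŷ=1|S=0)`. -/
noncomputable def SP {Ω : Type*} [Fintype Ω] (p : Ω → ℝ) (Yhat S : Ω → Bool) : ℝ :=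
  cPr p (fun ω => Yhat ω = true) (fun ω => S ω = true)
    - cPr p (fun ω => Yhat ω = true) (fun ω => S ω = false)

/-- Balanced error rate `BER(Ŷ,S) = ½P(Ŷ=1|S=0) + ½P(Ŷ=0|S=1)`. -/
noncomputable def BER {Ω : Type*} [Fintype Ω] (p : Ω → ℝ) (Yhat S : Ω → Bool) : ℝ :=
  (1/2) * cPr p (fun ω => Yhat ω = true) (fun ω => S ω = false)
    + (1/2) * cPr p (fun ω => Yhat ω = false) (fun ω => S ω = true)

lemma Pr_mono {Ω : Type*} [Fintype Ω] (p : Ω → ℝ) (hp : ∀ ω, 0 ≤ p ω)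
    {E F : Ω → Prop} (h : ∀ ω, E ω → F ω) : Pr p E ≤ Pr p F := by
  apply Finset.sum_le_sum
  intro ω _
  by_cases hE : E ω
  · simp [hE, h ω hE]
  · simp only [hE, if_false]
    by_cases hF : F ω <;> simp [hF, hp ω]

lemma Pr_union_le {Ω : Type*} [Fintype Ω] (p : Ω → ℝ) (hp : ∀ ω, 0 ≤ p ω)
    (E F : Ω → Prop) : Pr p (fun ω => E ω ∨ F ω) ≤ Pr p E + Pr p F := by
  unfold Pr
  rw [← Finset.sum_add_distrib]
  apply Finset.sum_le_sum
  intro ω _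
  by_cases hE : E ω <;> by_cases hF : F ω <;> simp [hE, hF, hp ω]

/-- if `Ŷ` is `D,d` individually fair w.r.t. `X` (via the decision
probability `pfun x = P(Ŷ=1|X=x)`), and `P(d(x,f(x)) > ε) ≤ δ`, then for `Ŷ_f`
with decision probability `x ↦ pfun (f x)`, for independent `x, x' ~ X`,
`P[D(P(Ŷ_f=1|X=x), P(Ŷ_f=1|X=x')) > d(x,x') + 2ε] ≤ 2δ`. -/
theorem stmt8 {Ω 𝒳 : Type*} [Fintype Ω] (p : Ω → ℝ) (hp : ∀ ω, 0 ≤ p ω)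
    (hsum : ∑ ω, p ω = 1) (X : Ω → 𝒳)
    (d : 𝒳 → 𝒳 → ℝ) (D : ℝ → ℝ → ℝ)
    (hDtri : ∀ a b c, D a c ≤ D a b + D b c) (hDsymm : ∀ a b, D a b = D b a)
    (pfun : 𝒳 → ℝ) (hfair : ∀ x x', D (pfun x) (pfun x') ≤ d x x')
    (f : 𝒳 → 𝒳) (ε δ : ℝ) (hε : 0 ≤ ε) (hδ0 : 0 ≤ δ) (hδ1 : δ ≤ 1)
    (hrec : Pr p (fun ω => ε < d (X ω) (f (X ω))) ≤ δ) :
    Pr (fun ωp : Ω × Ω => p ωp.1 * p ωp.2)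
      (fun ωp => d (X ωp.1) (X ωp.2) + 2 * ε
        < D (pfun (f (X ωp.1))) (pfun (f (X ωp.2)))) ≤ 2 * δ := by
  classical
  have hfst : Pr (fun ωp : Ω × Ω => p ωp.1 * p ωp.2)
      (fun ωp => ε < d (X ωp.1) (f (X ωp.1))) = Pr p (fun ω => ε < d (X ω) (f (X ω))) := by
    unfold Pr
    rw [Fintype.sum_prod_type]
    calc (∑ a, ∑ b, if ε < d (X a) (f (X a)) then p a * p b else 0)
        = ∑ a, (if ε < d (X a) (f (X a)) then p a else 0) * (∑ b, p b) := by
          apply Finset.sum_congr rfl; intro a _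
          rw [Finset.mul_sum]
          apply Finset.sum_congr rfl; intro b _
          by_cases h : ε < d (X a) (f (X a)) <;> simp [h]
      _ = ∑ a, (if ε < d (X a) (f (X a)) then p a else 0) := by simp [hsum]
  have hsnd : Pr (fun ωp : Ω × Ω => p ωp.1 * p ωp.2)
      (fun ωp => ε < d (X ωp.2) (f (X ωp.2))) = Pr p (fun ω => ε < d (X ω) (f (X ω))) := by
    unfold Pr
    rw [Fintype.sum_prod_type]
    calc (∑ a, ∑ b, if ε < d (X b) (f (X b)) then p a * p b else 0)
        = ∑ a, p a * (∑ b, if ε < d (X b) (f (X b)) then p b else 0) := by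
          apply Finset.sum_congr rfl; intro a _
          rw [Finset.mul_sum]
          apply Finset.sum_congr rfl; intro b _
          by_cases h : ε < d (X b) (f (X b)) <;> simp [h]
      _ = (∑ a, p a) * (∑ b, if ε < d (X b) (f (X b)) then p b else 0) := by
          rw [← Finset.sum_mul]
      _ = _ := by rw [hsum, one_mul]
  have hpp : ∀ ωp : Ω × Ω, 0 ≤ p ωp.1 * p ωp.2 := fun ωp => mul_nonneg (hp _) (hp _)
  have himp : ∀ ωp : Ω × Ω,
      (d (X ωp.1) (X ωp.2) + 2 * ε < D (pfun (f (X ωp.1))) (pfun (f (X ωp.2)))) →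
      (ε < d (X ωp.1) (f (X ωp.1)) ∨ ε < d (X ωp.2) (f (X ωp.2))) := by
    intro ωp hbad
    by_contra hcon
    push_neg at hcon
    obtain ⟨h1, h2⟩ := hcon
    have key : D (pfun (f (X ωp.1))) (pfun (f (X ωp.2)))
        ≤ d (X ωp.1) (X ωp.2) + 2 * ε := by
      calc D (pfun (f (X ωp.1))) (pfun (f (X ωp.2)))
          ≤ D (pfun (f (X ωp.1))) (pfun (X ωp.1))
            + D (pfun (X ωp.1)) (pfun (f (X ωp.2))) := hDtri _ _ _
        _ ≤ D (pfun (f (X ωp.1))) (pfun (X ωp.1))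
            + (D (pfun (X ωp.1)) (pfun (X ωp.2)) + D (pfun (X ωp.2)) (pfun (f (X ωp.2)))) := by
            have := hDtri (pfun (X ωp.1)) (pfun (X ωp.2)) (pfun (f (X ωp.2)))
            linarith
        _ ≤ ε + (d (X ωp.1) (X ωp.2) + ε) := by
            have a1 : D (pfun (f (X ωp.1))) (pfun (X ωp.1)) ≤ ε := by
              rw [hDsymm]; exact le_trans (hfair _ _) h1
            have a2 : D (pfun (X ωp.2)) (pfun (f (X ωp.2))) ≤ ε :=
              le_trans (hfair _ _) h2
            have a3 : D (pfun (X ωp.1)) (pfun (X ωp.2)) ≤ d (X ωp.1) (X ωp.2) := hfair _ _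
            linarith
        _ = d (X ωp.1) (X ωp.2) + 2 * ε := by ring
    linarith
  refine le_trans (Pr_mono _ hpp himp) (le_trans (Pr_union_le _ hpp _ _) ?_)
  rw [hfst, hsnd]
  linarith
end

section
/- Suppose x ↦ P(Y=1|X=x) is l_Y-Lipschitz and x ↦ P(S=1|X=x) is l_S-Lipschitz with respect to a distance d, and suppose for every x with Ŷ*(f(x)) ≠ Ŷ*(x) there exists x' with P(Y=1|X=x') − c_Y = λ(P(S=1|X=x') − c_S) and d(x,x') ≤ d(x,f(x)). Then the cost of mistrust satisfies R_{YS}(Ŷ*_f) − R_{YS}(Ŷ*) ≤ (l_Y + λ·l_S)·E_x[d(x, f(x))]. -/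
open Finset Classical Real

open Classical in
/-- Cost-sensitive risk of the (randomized) decision rule `q`, where
`P(Ŷ=1|X=x) = q(x)` and `Ŷ` is conditionally independent of the label given `X`:
`R(q) = c·P(L=0)·P(Ŷ=1|L=0) + (1-c)·P(L=1)·P(Ŷ=0|L=1)`. -/
noncomputable def ruleRisk {Ω 𝒳 : Type*} [Fintype Ω] (p : Ω → ℝ) (L : Ω → Bool)
    (X : Ω → 𝒳) (q : 𝒳 → ℝ) (c : ℝ) : ℝ :=
  c * Pr p (fun ω => L ω = false)
      * ((∑ ω, if L ω = false then p ω * q (X ω) else 0) / Pr p (fun ω => L ω = false))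
    + (1 - c) * Pr p (fun ω => L ω = true)
      * ((∑ ω, if L ω = true then p ω * (1 - q (X ω)) else 0) / Pr p (fun ω => L ω = true))

/-- Combined risk `R_{YS}(q) = R_Y(q) - λ·R_S(q)`. -/
noncomputable def combRisk {Ω 𝒳 : Type*} [Fintype Ω] (p : Ω → ℝ) (Y S : Ω → Bool)
    (X : Ω → 𝒳) (q : 𝒳 → ℝ) (cY cS lam : ℝ) : ℝ :=
  ruleRisk p Y X q cY - lam * ruleRisk p S X q cS

section Aux

variable {Ω 𝒳 : Type*} [Fintype Ω] [Fintype 𝒳]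

lemma Pr_nonneg (p : Ω → ℝ) (hp : ∀ ω, 0 ≤ p ω) (E : Ω → Prop) : 0 ≤ Pr p E := by
  unfold Pr
  refine Finset.sum_nonneg fun ω _ => ?_
  split
  · exact hp ω
  · exact le_refl 0

lemma Pr_zero (p : Ω → ℝ) (hp : ∀ ω, 0 ≤ p ω) (E : Ω → Prop) (h : Pr p E = 0)
    (ω : Ω) (hω : E ω) : p ω = 0 := by
  by_contra hne
  have hpos : 0 < p ω := lt_of_le_of_ne (hp ω) (Ne.symm hne)
  have hlt : 0 < Pr p E := by
    unfold Pr
    refine Finset.sum_pos' (fun i _ => ?_) ⟨ω, Finset.mem_univ ω, ?_⟩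
    · split
      · exact hp i
      · exact le_refl 0
    · rw [if_pos hω]; exact hpos
  exact absurd h (ne_of_gt hlt)

lemma Pr_cancel (p : Ω → ℝ) (P : Ω → Prop) (S : ℝ) (hS : Pr p P = 0 → S = 0) :
    Pr p P * (S / Pr p P) = S := by
  by_cases h : Pr p P = 0
  · rw [h, hS h]; ring
  · rw [mul_comm, div_mul_cancel₀ _ h]

lemma cPr_mul (p : Ω → ℝ) (hp : ∀ ω, 0 ≤ p ω) (A B : Ω → Prop) :
    Pr p (fun ω => A ω ∧ B ω) = cPr p A B * Pr p B := by
  unfold cPr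
  by_cases hB : Pr p B = 0
  · rw [hB, mul_zero]
    unfold Pr
    refine Finset.sum_eq_zero fun ω _ => ?_
    split_ifs with hω
    · exact Pr_zero p hp B hB ω hω.2
    · rfl
  · rw [div_mul_cancel₀ _ hB]

lemma ruleRisk_eq (p : Ω → ℝ) (hp : ∀ ω, 0 ≤ p ω) (L : Ω → Bool) (X : Ω → 𝒳)
    (q : 𝒳 → ℝ) (c : ℝ) :
    ruleRisk p L X q c = (1 - c) * Pr p (fun ω => L ω = true)
      + ∑ ω, p ω * q (X ω) * (c - if L ω = true then 1 else 0) := by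
  unfold ruleRisk
  have h1 : Pr p (fun ω => L ω = false)
      * ((∑ ω, if L ω = false then p ω * q (X ω) else 0) / Pr p (fun ω => L ω = false))
      = ∑ ω, if L ω = false then p ω * q (X ω) else 0 := by
    refine Pr_cancel p _ _ fun h => Finset.sum_eq_zero fun ω _ => ?_
    split_ifs with hω
    · rw [Pr_zero p hp _ h ω hω, zero_mul]
    · rfl
  have h2 : Pr p (fun ω => L ω = true)
      * ((∑ ω, if L ω = true then p ω * (1 - q (X ω)) else 0) / Pr p (fun ω => L ω = true))
      = ∑ ω, if L ω = true then p ω * (1 - q (X ω)) else 0 := by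
    refine Pr_cancel p _ _ fun h => Finset.sum_eq_zero fun ω _ => ?_
    split_ifs with hω
    · rw [Pr_zero p hp _ h ω hω, zero_mul]
    · rfl
  rw [mul_assoc, mul_assoc, h1, h2]
  unfold Pr
  simp only [Finset.mul_sum]
  rw [← Finset.sum_add_distrib, ← Finset.sum_add_distrib]
  refine Finset.sum_congr rfl fun ω _ => ?_
  by_cases hL : L ω = true <;> simp [hL] <;> ring

end Aux
/-- under Lipschitz conditions on the posteriors and the geometric
condition on the decision boundary, the cost of mistrust satisfies
`R_{YS}(Ŷ*_f) - R_{YS}(Ŷ*) ≤ (l_Y + λ·l_S)·E_x[d(x, f(x))]`. -/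
theorem stmt12 {Ω 𝒳 : Type*} [Fintype Ω] [Fintype 𝒳] (p : Ω → ℝ) (hp : ∀ ω, 0 ≤ p ω)
    (hsum : ∑ ω, p ω = 1) (X : Ω → 𝒳) (f : 𝒳 → 𝒳) (Y S : Ω → Bool)
    (cY cS lam : ℝ) (hcY : cY ∈ Set.Icc (0:ℝ) 1) (hcS : cS ∈ Set.Icc (0:ℝ) 1)
    (hlam : 0 ≤ lam)
    (d : 𝒳 → 𝒳 → ℝ) (lY lS : ℝ)
    (etaY etaS : 𝒳 → ℝ)
    (hetaY : etaY = fun x => cPr p (fun ω => Y ω = true) (fun ω => X ω = x))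
    (hetaS : etaS = fun x => cPr p (fun ω => S ω = true) (fun ω => X ω = x))
    -- Lipschitz conditions:
    (hLipY : ∀ x x', |etaY x - etaY x'| ≤ lY * d x x')
    (hLipS : ∀ x x', |etaS x - etaS x'| ≤ lS * d x x')
    -- the optimal rule using `X`:
    (ystar : 𝒳 → ℝ)
    (hystar : ystar = fun x => if lam * (etaS x - cS) < etaY x - cY then 1 else 0)
    -- boundary condition: any disagreement point has a boundary point nearby
    (hbdry : ∀ x : 𝒳, ystar (f x) ≠ ystar x →
      ∃ x' : 𝒳, etaY x' - cY = lam * (etaS x' - cS) ∧ d x x' ≤ d x (f x))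
    -- `Ŷ*_f`: minimizer of `R_{YS}` among rules that are functions of `X_f = f(X)`:
    (qf : 𝒳 → ℝ) (hqfrange : ∀ x, qf x ∈ Set.Icc (0:ℝ) 1)
    (hqffact : ∀ x x', f x = f x' → qf x = qf x')
    (hqfmin : ∀ q : 𝒳 → ℝ, (∀ x, q x ∈ Set.Icc (0:ℝ) 1) →
      (∀ x x', f x = f x' → q x = q x') →
      combRisk p Y S X qf cY cS lam ≤ combRisk p Y S X q cY cS lam) :
    combRisk p Y S X qf cY cS lam - combRisk p Y S X ystar cY cS lam
      ≤ (lY + lam * lS) * ∑ x : 𝒳, Pr p (fun ω => X ω = x) * d x (f x) := by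
  classical
  -- the risk of any rule, as an explicit linear functional
  have key : ∀ q : 𝒳 → ℝ, combRisk p Y S X q cY cS lam
      = ((1 - cY) * Pr p (fun ω => Y ω = true) - lam * ((1 - cS) * Pr p (fun ω => S ω = true)))
        - ∑ x, q x * (Pr p (fun ω => X ω = x) * ((etaY x - cY) - lam * (etaS x - cS))) := by
    intro q
    unfold combRisk
    rw [ruleRisk_eq p hp Y X q cY, ruleRisk_eq p hp S X q cS]
    have hsum1 : ∑ ω, p ω * q (X ω) * (cY - if Y ω = true then 1 else 0)
        - lam * ∑ ω, p ω * q (X ω) * (cS - if S ω = true then 1 else 0)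
        = ∑ ω, p ω * q (X ω)
            * ((cY - if Y ω = true then 1 else 0) - lam * (cS - if S ω = true then 1 else 0)) := by
      rw [Finset.mul_sum, ← Finset.sum_sub_distrib]
      exact Finset.sum_congr rfl fun ω _ => by ring
    have hfib : ∑ ω, p ω * q (X ω)
            * ((cY - if Y ω = true then 1 else 0) - lam * (cS - if S ω = true then 1 else 0))
        = ∑ x, q x * (∑ ω, if X ω = x then
            p ω * ((cY - if Y ω = true then 1 else 0) - lam * (cS - if S ω = true then 1 else 0))
            else 0) := by
      have step1 : ∀ ω : Ω, p ω * q (X ω)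
            * ((cY - if Y ω = true then 1 else 0) - lam * (cS - if S ω = true then 1 else 0))
          = ∑ x, if X ω = x then q x
              * (p ω * ((cY - if Y ω = true then 1 else 0)
                  - lam * (cS - if S ω = true then 1 else 0))) else 0 := by
        intro ω
        rw [Finset.sum_ite_eq]
        simp only [Finset.mem_univ, if_true]
        ring
      rw [Finset.sum_congr rfl fun ω _ => step1 ω, Finset.sum_comm]
      refine Finset.sum_congr rfl fun x _ => ?_
      rw [Finset.mul_sum]
      refine Finset.sum_congr rfl fun ω _ => ?_
      split_ifs <;> simp
    have hx : ∀ x : 𝒳, (∑ ω, if X ω = x then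
          p ω * ((cY - if Y ω = true then 1 else 0) - lam * (cS - if S ω = true then 1 else 0))
          else 0)
        = - (Pr p (fun ω => X ω = x) * ((etaY x - cY) - lam * (etaS x - cS))) := by
      intro x
      have e1 : ∀ ω : Ω, (if X ω = x then
            p ω * ((cY - if Y ω = true then 1 else 0) - lam * (cS - if S ω = true then 1 else 0))
            else 0)
          = (cY * (if X ω = x then p ω else 0) - (if Y ω = true ∧ X ω = x then p ω else 0))
            - lam * (cS * (if X ω = x then p ω else 0) - (if S ω = true ∧ X ω = x then p ω else 0)) := by
        intro ω
        by_cases h1 : X ω = x <;> by_cases h2 : Y ω = true <;> by_cases h3 : S ω = true <;>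
          simp [h1, h2, h3] <;> ring
      rw [Finset.sum_congr rfl fun ω _ => e1 ω]
      have split4 : ∑ ω, ((cY * (if X ω = x then p ω else 0) - (if Y ω = true ∧ X ω = x then p ω else 0))
            - lam * (cS * (if X ω = x then p ω else 0) - (if S ω = true ∧ X ω = x then p ω else 0)))
          = (cY * Pr p (fun ω => X ω = x) - Pr p (fun ω => Y ω = true ∧ X ω = x))
            - lam * (cS * Pr p (fun ω => X ω = x) - Pr p (fun ω => S ω = true ∧ X ω = x)) := by
        unfold Pr
        simp only [Finset.mul_sum, ← Finset.sum_sub_distrib]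
        exact Finset.sum_congr rfl fun ω _ => by ring
      rw [split4]
      have hAY : Pr p (fun ω => Y ω = true ∧ X ω = x) = etaY x * Pr p (fun ω => X ω = x) := by
        rw [cPr_mul p hp _ _]
        simp only [hetaY]
      have hAS : Pr p (fun ω => S ω = true ∧ X ω = x) = etaS x * Pr p (fun ω => X ω = x) := by
        rw [cPr_mul p hp _ _]
        simp only [hetaS]
      rw [hAY, hAS]; ring
    have hxs : ∑ x, q x * (∑ ω, if X ω = x then
          p ω * ((cY - if Y ω = true then 1 else 0) - lam * (cS - if S ω = true then 1 else 0))
          else 0)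
        = - ∑ x, q x * (Pr p (fun ω => X ω = x) * ((etaY x - cY) - lam * (etaS x - cS))) := by
      rw [← Finset.sum_neg_distrib]
      exact Finset.sum_congr rfl fun x _ => by rw [hx x]; ring
    linarith [hsum1, hfib, hxs]
  -- compare qf against ystar ∘ f
  have hrange : ∀ x, (fun x => ystar (f x)) x ∈ Set.Icc (0:ℝ) 1 := by
    intro x
    simp only [hystar]
    split_ifs <;> constructor <;> norm_num
  have hfact : ∀ x x', f x = f x' → ystar (f x) = ystar (f x') := fun x x' h => by rw [h]
  have hmin := hqfmin (fun x => ystar (f x)) hrange hfact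
  have hdiff : combRisk p Y S X (fun x => ystar (f x)) cY cS lam
        - combRisk p Y S X ystar cY cS lam
      = ∑ x, (ystar x - ystar (f x))
          * (Pr p (fun ω => X ω = x) * ((etaY x - cY) - lam * (etaS x - cS))) := by
    rw [key, key]
    have e : ∀ C A B : ℝ, (C - A) - (C - B) = B - A := fun _ _ _ => by ring
    rw [e, ← Finset.sum_sub_distrib]
    exact Finset.sum_congr rfl fun x _ => by ring
  have hpt : ∀ x : 𝒳, (ystar x - ystar (f x))
        * (Pr p (fun ω => X ω = x) * ((etaY x - cY) - lam * (etaS x - cS)))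
      ≤ (lY + lam * lS) * (Pr p (fun ω => X ω = x) * d x (f x)) := by
    intro x
    have hpxn : 0 ≤ Pr p (fun ω => X ω = x) := Pr_nonneg p hp _
    have hY' := hLipY x (f x)
    have hS' := hLipS x (f x)
    have hdY : 0 ≤ lY * d x (f x) := le_trans (abs_nonneg _) hY'
    have hdS : 0 ≤ lS * d x (f x) := le_trans (abs_nonneg _) hS'
    have hdS2 : 0 ≤ lam * (lS * d x (f x)) := mul_nonneg hlam hdS
    have habs : |((etaY x - cY) - lam * (etaS x - cS))
          - ((etaY (f x) - cY) - lam * (etaS (f x) - cS))| ≤ (lY + lam * lS) * d x (f x) := by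
      have e : ((etaY x - cY) - lam * (etaS x - cS)) - ((etaY (f x) - cY) - lam * (etaS (f x) - cS))
          = (etaY x - etaY (f x)) - lam * (etaS x - etaS (f x)) := by ring
      rw [e]
      calc |(etaY x - etaY (f x)) - lam * (etaS x - etaS (f x))|
          ≤ |etaY x - etaY (f x)| + |lam * (etaS x - etaS (f x))| := abs_sub _ _
        _ = |etaY x - etaY (f x)| + lam * |etaS x - etaS (f x)| := by
            rw [abs_mul, abs_of_nonneg hlam]
        _ ≤ lY * d x (f x) + lam * (lS * d x (f x)) := by
            exact add_le_add hY' (mul_le_mul_of_nonneg_left hS' hlam)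
        _ = (lY + lam * lS) * d x (f x) := by ring
    have hcore : (ystar x - ystar (f x)) * ((etaY x - cY) - lam * (etaS x - cS))
        ≤ (lY + lam * lS) * d x (f x) := by
      have hb0 : 0 ≤ (lY + lam * lS) * d x (f x) := by nlinarith
      have habs1 := le_abs_self (((etaY x - cY) - lam * (etaS x - cS))
          - ((etaY (f x) - cY) - lam * (etaS (f x) - cS)))
      have habs2 := neg_le_abs (((etaY x - cY) - lam * (etaS x - cS))
          - ((etaY (f x) - cY) - lam * (etaS (f x) - cS)))
      simp only [hystar]
      by_cases h1 : lam * (etaS x - cS) < etaY x - cY <;>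
        by_cases h2 : lam * (etaS (f x) - cS) < etaY (f x) - cY
      · rw [if_pos h1, if_pos h2]; linarith
      · rw [if_pos h1, if_neg h2]; push_neg at h2; linarith
      · rw [if_neg h1, if_pos h2]; push_neg at h1; linarith
      · rw [if_neg h1, if_neg h2]; linarith
    have h2 := mul_le_mul_of_nonneg_right hcore hpxn
    calc (ystar x - ystar (f x)) * (Pr p (fun ω => X ω = x) * ((etaY x - cY) - lam * (etaS x - cS)))
        = ((ystar x - ystar (f x)) * ((etaY x - cY) - lam * (etaS x - cS)))
            * Pr p (fun ω => X ω = x) := by ring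
      _ ≤ ((lY + lam * lS) * d x (f x)) * Pr p (fun ω => X ω = x) := h2
      _ = (lY + lam * lS) * (Pr p (fun ω => X ω = x) * d x (f x)) := by ring
  calc combRisk p Y S X qf cY cS lam - combRisk p Y S X ystar cY cS lam
      ≤ combRisk p Y S X (fun x => ystar (f x)) cY cS lam
          - combRisk p Y S X ystar cY cS lam := by linarith
    _ = ∑ x, (ystar x - ystar (f x))
          * (Pr p (fun ω => X ω = x) * ((etaY x - cY) - lam * (etaS x - cS))) := hdiff
    _ ≤ ∑ x, (lY + lam * lS) * (Pr p (fun ω => X ω = x) * d x (f x)) :=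
        Finset.sum_le_sum fun x _ => hpt x
    _ = (lY + lam * lS) * ∑ x : 𝒳, Pr p (fun ω => X ω = x) * d x (f x) := by
        rw [Finset.mul_sum]
end
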